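/- For every real number α with 2/3 < α < 1, the function b(α) = (1+√2)^α · (α/(1−α))^(1−α) · (α/(2α−1))^(2α−1) satisfies b(α) ≤ 3.18. -/

import Mathlib

/-!
Write `a = 1 - α` and `c = 2α - 1`, so that `a + c = α`. For every `t ∈ (0,1)`, weighted AM-GM
gives `(α t / a)^a (α (1 - t) / c)^c ≤ 1`, and `((1 - t)^2 / t)^α = (1 - t)/t · t^a (1 - t)^c`.
Hence `b(α) ≤ (1 - t)/t` whenever `1 + √2 ≤ (1 - t)^2 / t`, uniformly in `α`. The best such `t`
solves `(1 - t)^2 = (1 + √2) t`, i.e. `t ≈ 0.23954`, where `(1 - t)/t ≈ 3.1747` is the maximum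
of `b` (AM-GM is tight at `t = a / α`); `t = 0.2393` is a rational value just below it.
-/

open Real

theorem rpow_mul_rpow_le_add_rpow_add {a c x y : ℝ} (ha : 0 < a) (hc : 0 < c)
    (hx : 0 ≤ x) (hy : 0 ≤ y) :
    (x * (a + c) / a) ^ a * (y * (a + c) / c) ^ c ≤ (x + y) ^ (a + c) := by
  have hs : 0 < a + c := by positivity
  have hweights : a / (a + c) + c / (a + c) = 1 := by field_simp
  have hamgm := geom_mean_le_arith_mean2_weighted (by positivity) (by positivity)
    (by positivity : 0 ≤ x * (a + c) / a) (by positivity : 0 ≤ y * (a + c) / c) hweights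
  have hmean : a / (a + c) * (x * (a + c) / a) + c / (a + c) * (y * (a + c) / c) = x + y := by
    field_simp
  rw [hmean] at hamgm
  have hpow := rpow_le_rpow (by positivity) hamgm hs.le
  rwa [mul_rpow (by positivity) (by positivity), ← rpow_mul (by positivity),
    ← rpow_mul (by positivity), div_mul_cancel₀ _ hs.ne', div_mul_cancel₀ _ hs.ne'] at hpow

theorem sq_div_rpow_eq_div_mul_rpow_mul_rpow {x y : ℝ} (hx : 0 < x) (hy : 0 < y) (α : ℝ) :
    (y ^ 2 / x) ^ α = y / x * (x ^ (1 - α) * y ^ (2 * α - 1)) := by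
  rw [div_rpow (by positivity) hx.le, rpow_sub hx, rpow_sub hy, rpow_one, rpow_one,
    ← rpow_natCast, ← rpow_mul hy.le, Nat.cast_ofNat, mul_comm 2 α]
  field_simp

theorem b_le_one_sub_div_of_le_sq_div {α β t : ℝ} (hα : 1 / 2 < α) (hα₁ : α < 1)
    (ht₀ : 0 < t) (ht₁ : t < 1) (hβ₀ : 0 ≤ β) (hβ : β ≤ (1 - t) ^ 2 / t) :
    β ^ α * (α / (1 - α)) ^ (1 - α) * (α / (2 * α - 1)) ^ (2 * α - 1) ≤ (1 - t) / t := by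
  have ha : 0 < 1 - α := by linarith
  have hc : 0 < 2 * α - 1 := by linarith
  have hsum : 1 - α + (2 * α - 1) = α := by ring
  set E := (α / (1 - α)) ^ (1 - α) * (α / (2 * α - 1)) ^ (2 * α - 1)
  have hE : t ^ (1 - α) * (1 - t) ^ (2 * α - 1) * E ≤ 1 := by
    have h := rpow_mul_rpow_le_add_rpow_add ha hc ht₀.le (sub_nonneg.2 ht₁.le)
    rw [add_sub_cancel, one_rpow, hsum, mul_div_assoc, mul_div_assoc,
      mul_rpow ht₀.le (by positivity), mul_rpow (by linarith) (by positivity)] at h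
    linarith
  calc β ^ α * (α / (1 - α)) ^ (1 - α) * (α / (2 * α - 1)) ^ (2 * α - 1)
      = β ^ α * E := mul_assoc _ _ _
    _ ≤ ((1 - t) ^ 2 / t) ^ α * E := by gcongr
    _ = (1 - t) / t * (t ^ (1 - α) * (1 - t) ^ (2 * α - 1) * E) := by
      rw [sq_div_rpow_eq_div_mul_rpow_mul_rpow ht₀ (by linarith)]; ring
    _ ≤ (1 - t) / t := mul_le_of_le_one_right (div_nonneg (by linarith) ht₀.le) hE

open Real in
/-- For every real `α` with `2/3 < α < 1`, the function
`b(α) = (1+√2)^α · (α/(1−α))^(1−α) · (α/(2α−1))^(2α−1)` satisfies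
`b(α) ≤ 3.18`. -/
theorem b_le_318 (α : ℝ) (h₁ : 2 / 3 < α) (h₂ : α < 1) :
    (1 + Real.sqrt 2) ^ α * (α / (1 - α)) ^ (1 - α) * (α / (2 * α - 1)) ^ (2 * α - 1)
      ≤ 3.18 := by
  have hsqrt : √2 ≤ 1.4143 := sqrt_le_iff.2 ⟨by norm_num, by norm_num⟩
  calc (1 + √2) ^ α * (α / (1 - α)) ^ (1 - α) * (α / (2 * α - 1)) ^ (2 * α - 1)
      ≤ (1 - 0.2393) / 0.2393 :=
        b_le_one_sub_div_of_le_sq_div (by linarith) h₂ (by norm_num) (by norm_num)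
          (by positivity) (by norm_num; linarith)
    _ ≤ 3.18 := by norm_num
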